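/- Let $d=2m+1\ge 5$, $k\ge d$, and let $j$ satisfy $m+1\le j\le d-1$. Define $A_j=(-1)^{d-1-j}\sum_{i=0}^{d-1-j}(-1)^i\left[\binom{d-1-i}{j}\binom{k-1}{i}+\binom{d-2-i}{j-1}\binom{k-2}{i-1}\right]$. Then $A_j=\binom{k-j-1}{d-j-1}$. -/

import Mathlib

/-- Integer binomial coefficient, zero outside the range `0 ≤ b ≤ a`. -/
def ch (a b : ℤ) : ℤ := if 0 ≤ b ∧ b ≤ a then ((a.toNat).choose b.toNat : ℤ) else 0

/-! Write `n = d - 1 - j`. Since `(-1)^b C(j+b, j) = C(-j-1, b)`, each of the two alternating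
sums is a Chu–Vandermonde convolution with a negative upper index, computed in the binomial
ring `ℤ` by `Ring.add_choose_eq`: the first is `C(k-j-2, n)`, the second, shifted by one,
is `C(k-j-2, n-1)`. Pascal's rule adds them up to `C(k-j-1, n)`. -/

open Finset

lemma ch_natCast (a b : ℕ) : ch a b = a.choose b := by
  unfold ch
  split_ifs with h
  · simp
  · rw [Nat.choose_eq_zero_of_lt (by omega), Nat.cast_zero]

lemma ch_eq_ringChoose {a : ℤ} (ha : 0 ≤ a) (b : ℕ) : ch a b = Ring.choose a b := by
  lift a to ℕ using ha
  rw [ch_natCast, Ring.choose_natCast]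

lemma ch_of_neg (a : ℤ) {b : ℤ} (hb : b < 0) : ch a b = 0 :=
  if_neg fun h => hb.not_ge h.1

lemma Ring.choose_neg_natCast_sub_one (j b : ℕ) :
    Ring.choose (-(j : ℤ) - 1) b = (-1) ^ b * (j + b).choose j := by
  rw [← neg_add', Ring.choose_neg, show (j : ℤ) + 1 + b - 1 = ((j + b : ℕ) : ℤ) by push_cast; ring,
    Ring.choose_natCast, Nat.choose_symm_add, Units.smul_def, Int.coe_negOnePow_natCast, smul_eq_mul]

lemma neg_one_pow_mul_neg_one_pow_of_le {n i : ℕ} (h : i ≤ n) :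
    (-1 : ℤ) ^ n * (-1) ^ i = (-1) ^ (n - i) := by
  obtain ⟨t, rfl⟩ := Nat.exists_eq_add_of_le h
  rw [Nat.add_sub_cancel_left, pow_add, mul_right_comm, ← mul_pow]
  simp

lemma alternating_sum_choose_mul_ringChoose (N : ℤ) (j n : ℕ) :
    (-1) ^ n * ∑ i ∈ range (n + 1), (-1) ^ i * ((j + n - i).choose j * Ring.choose N i)
      = Ring.choose (N - j - 1) n := by
  rw [sub_sub, sub_eq_add_neg, Ring.add_choose_eq n (Commute.all _ _),
    Nat.sum_antidiagonal_eq_sum_range_succ_mk, mul_sum]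
  refine sum_congr rfl fun i hi => ?_
  have hi : i ≤ n := Nat.lt_succ_iff.mp (mem_range.mp hi)
  rw [neg_add', Ring.choose_neg_natCast_sub_one, ← mul_assoc, neg_one_pow_mul_neg_one_pow_of_le hi,
    Nat.add_sub_assoc hi]
  ring

lemma alternating_sum_choose_mul_ringChoose_add_shift (N : ℤ) (j n : ℕ) :
    (-1) ^ n * ∑ i ∈ range (n + 1), (-1) ^ i *
        ((j + 1 + n - i).choose (j + 1) * Ring.choose (N + 1) i +
          if i = 0 then 0 else (j + n - i).choose j * Ring.choose N (i - 1))
      = Ring.choose (N - j) n := by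
  cases n with
  | zero => simp
  | succ n =>
    have unshifted := alternating_sum_choose_mul_ringChoose (N + 1) (j + 1) (n + 1)
    have shifted : (-1) ^ (n + 1) * ∑ i ∈ range (n + 1 + 1), (-1) ^ i *
        (if i = 0 then 0 else ((j + (n + 1) - i).choose j : ℤ) * Ring.choose N (i - 1))
          = Ring.choose (N - j - 1) n := by
      rw [sum_range_succ', ← alternating_sum_choose_mul_ringChoose]
      simp only [Nat.succ_ne_zero, if_false, if_true, mul_zero, add_zero, Nat.add_sub_cancel]
      rw [mul_sum, mul_sum]
      refine sum_congr rfl fun i _ => ?_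
      rw [show j + (n + 1) - (i + 1) = j + n - i by omega]
      ring
    rw [show N + 1 - ((j + 1 : ℕ) : ℤ) - 1 = N - j - 1 by push_cast; ring] at unshifted
    rw [show N - j = N - j - 1 + 1 by ring, Ring.choose_succ_succ, ← shifted, ← unshifted,
      ← mul_add, ← sum_add_distrib]
    simp only [mul_add, add_comm]

theorem A_coefficient_general (d m k j : ℕ) (hk : d ≤ k) (hj1 : m + 1 ≤ j) (hj2 : j ≤ d - 1) :
    (-1 : ℤ) ^ (d - 1 - j) *
        ∑ i ∈ Finset.range (d - j),
          (-1 : ℤ) ^ i *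
            (ch ((d : ℤ) - 1 - i) (j : ℤ) * ch ((k : ℤ) - 1) (i : ℤ) +
              ch ((d : ℤ) - 2 - i) ((j : ℤ) - 1) * ch ((k : ℤ) - 2) ((i : ℤ) - 1))
      = ch ((k : ℤ) - j - 1) ((d : ℤ) - j - 1) := by
  obtain ⟨j, rfl⟩ : ∃ j', j = j' + 1 := ⟨j - 1, by omega⟩
  obtain ⟨n, rfl⟩ : ∃ n, d = j + 1 + n + 1 := ⟨d - j - 2, by omega⟩
  rw [show j + 1 + n + 1 - 1 - (j + 1) = n by omega, show j + 1 + n + 1 - (j + 1) = n + 1 by omega,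
    show ((j + 1 + n + 1 : ℕ) : ℤ) - (j + 1 : ℕ) - 1 = n by omega,
    show (k : ℤ) - (j + 1 : ℕ) - 1 = k - 2 - j by push_cast; ring, ch_eq_ringChoose (by omega),
    ← alternating_sum_choose_mul_ringChoose_add_shift]
  refine congrArg _ (sum_congr rfl fun i hi => ?_)
  have hi : i ≤ n := Nat.lt_succ_iff.mp (mem_range.mp hi)
  rw [show ((j + 1 + n + 1 : ℕ) : ℤ) - 1 - i = (j + 1 + n - i : ℕ) by omega,
    show ((j + 1 + n + 1 : ℕ) : ℤ) - 2 - i = (j + n - i : ℕ) by omega,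
    show ((j + 1 : ℕ) : ℤ) - 1 = j by push_cast; ring, ch_natCast, ch_natCast,
    show (k : ℤ) - 1 = k - 2 + 1 by ring, ch_eq_ringChoose (by omega)]
  rcases i with _ | i
  · simp [ch_of_neg]
  · rw [if_neg i.succ_ne_zero, Nat.add_sub_cancel, Nat.cast_succ, add_sub_cancel_right,
      ch_eq_ringChoose (by omega)]

/-- For `d = 2m+1 ≥ 5`, `k ≥ d` and `m+1 ≤ j ≤ d-1`,
`A_j = (-1)^{d-1-j} ∑_{i=0}^{d-1-j} (-1)^i [C(d-1-i,j)C(k-1,i) + C(d-2-i,j-1)C(k-2,i-1)]`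
equals `C(k-j-1, d-j-1)`. -/
theorem A_coefficient (d m k j : ℕ) (hd : d = 2 * m + 1) (hd5 : 5 ≤ d)
    (hk : d ≤ k) (hj1 : m + 1 ≤ j) (hj2 : j ≤ d - 1) :
    (-1 : ℤ) ^ (d - 1 - j) *
        ∑ i ∈ Finset.range (d - j),
          (-1 : ℤ) ^ i *
            (ch ((d : ℤ) - 1 - i) (j : ℤ) * ch ((k : ℤ) - 1) (i : ℤ) +
              ch ((d : ℤ) - 2 - i) ((j : ℤ) - 1) * ch ((k : ℤ) - 2) ((i : ℤ) - 1))
      = ch ((k : ℤ) - j - 1) ((d : ℤ) - j - 1) :=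
  A_coefficient_general d m k j hk hj1 hj2
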